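/- Let d ≥ 1, α ∈ (0, β), β ∈ (0, d+2]. There exists a constant N = N(d, α, β) such that for every measurable g ≥ 0 on ℝ^{d+1}, every ρ ∈ (0, ∞), and every (t,x) ∈ C_ρ, one has P_α(1_{C_{2ρ}^c} g)(t,x) ≤ N ρ^{α-β} M_β g(t,x). -/

import Mathlib

open MeasureTheory Set ENNReal Filter

noncomputable section

/-- Euclidean space `ℝ^d`. -/
abbrev Ed (d : ℕ) := EuclideanSpace ℝ (Fin d)

/-- Points of `ℝ^{d+1}`: `z = (t, x)`. -/
abbrev Pt (d : ℕ) := ℝ × Ed d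

/-- The parabolic cylinder `C_ρ(t,x)`. -/
def pCyl (d : ℕ) (ρ : ℝ) (z : Pt d) : Set (Pt d) :=
  {w | dist z.2 w.2 < ρ ∧ z.1 ≤ w.1 ∧ w.1 < z.1 + ρ ^ 2}

/-- The average `⨍_{C_ρ(z)} f`. -/
def pAvg (d : ℕ) (ρ : ℝ) (z : Pt d) (f : Pt d → ℝ≥0∞) : ℝ≥0∞ :=
  (volume (pCyl d ρ z))⁻¹ * ∫⁻ w in pCyl d ρ z, f w

/-- The fractional maximal function `M_β f`. -/
def Mbeta (d : ℕ) (β : ℝ) (f : Pt d → ℝ≥0∞) (z : Pt d) : ℝ≥0∞ :=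
  ⨆ (ρ : ℝ) (_ : 0 < ρ), ENNReal.ofReal (ρ ^ β) * pAvg d ρ z f

/-- The kernel `p_α(s, r)`. -/
def pKer (d : ℕ) (α : ℝ) (s r : ℝ) : ℝ≥0∞ :=
  if 0 < s then ENNReal.ofReal (s ^ (-(((d : ℝ) + 2 - α) / 2)) * Real.exp (-(r ^ 2) / s)) else 0

/-- The parabolic potential `P_α f`. -/
def Palpha (d : ℕ) (α : ℝ) (f : Pt d → ℝ≥0∞) (z : Pt d) : ℝ≥0∞ :=
  ∫⁻ w : Pt d, pKer d α w.1 ‖w.2‖ * f (z.1 + w.1, z.2 + w.2)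

/-- The parabolic Morrey norm `‖f‖_{E_{p,β}(Q)}`. -/
def MorreyNorm (d : ℕ) (p β : ℝ) (Q : Set (Pt d)) (f : Pt d → ℝ≥0∞) : ℝ≥0∞ :=
  ⨆ (ρ : ℝ) (_ : 0 < ρ) (z : Pt d) (_ : z ∈ Q),
    ENNReal.ofReal (ρ ^ β) * (pAvg d ρ z fun w => Q.indicator f w ^ p) ^ (1 / p)

/-- The `L_p`-norm on `ℝ^{d+1}`. -/
def LpNormE (d : ℕ) (p : ℝ) (f : Pt d → ℝ≥0∞) : ℝ≥0∞ :=
  (∫⁻ z : Pt d, f z ^ p) ^ (1 / p)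

/-- The mixed norm `‖f‖_{L_{q₁,q₂}}`. -/
def MixedNorm (d : ℕ) (q₁ q₂ : ℝ) (f : Pt d → ℝ≥0∞) : ℝ≥0∞ :=
  (∫⁻ t : ℝ, (∫⁻ x : Ed d, f (t, x) ^ q₁) ^ (q₂ / q₁)) ^ (1 / q₂)

/-- The normalized mixed norm `‖f‖_{L_{q₁,q₂}(Γ)}`. -/
def MixedNormOn (d : ℕ) (q₁ q₂ : ℝ) (Γ : Set (Pt d)) (f : Pt d → ℝ≥0∞) : ℝ≥0∞ :=
  (MixedNorm d q₁ q₂ (Γ.indicator 1))⁻¹ * MixedNorm d q₁ q₂ (Γ.indicator f)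

/-- The mixed-norm parabolic Morrey norm `‖f‖_{E_{q₁,q₂,β}(Q)}`. -/
def MixedMorrey (d : ℕ) (q₁ q₂ β : ℝ) (Q : Set (Pt d)) (f : Pt d → ℝ≥0∞) : ℝ≥0∞ :=
  ⨆ (ρ : ℝ) (_ : 0 < ρ) (z : Pt d) (_ : z ∈ Q),
    ENNReal.ofReal (ρ ^ β) * MixedNormOn d q₁ q₂ (pCyl d ρ z) (Q.indicator f)

/-- The symmetric parabolic maximal function `M̂ f`. -/
def pMax (d : ℕ) (f : Pt d → ℝ≥0∞) (z : Pt d) : ℝ≥0∞ :=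
  ⨆ (r : ℝ) (_ : 0 < r) (w : Pt d) (_ : z ∈ pCyl d r w), pAvg d r w f

/-- The time derivative `∂_t u`. -/
def timeDeriv (d : ℕ) (u : Pt d → ℝ) (z : Pt d) : ℝ :=
  fderiv ℝ u z ((1 : ℝ), (0 : Ed d))

/-- The spatial partial derivative `D_i u`. -/
def spDeriv (d : ℕ) (i : Fin d) (u : Pt d → ℝ) (z : Pt d) : ℝ :=
  fderiv ℝ u z ((0 : ℝ), EuclideanSpace.single i (1 : ℝ))

/-- The Euclidean norm of the spatial gradient `|Du|`. -/
def gradNorm (d : ℕ) (u : Pt d → ℝ) (z : Pt d) : ℝ :=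
  Real.sqrt (∑ i : Fin d, spDeriv d i u z ^ 2)

/-- The spatial Laplacian `Δu`. -/
def lap (d : ℕ) (u : Pt d → ℝ) (z : Pt d) : ℝ :=
  ∑ i : Fin d, spDeriv d i (spDeriv d i u) z

/-- The (Frobenius) norm of the spatial Hessian `|D²u|`. -/
def hessNorm (d : ℕ) (u : Pt d → ℝ) (z : Pt d) : ℝ :=
  Real.sqrt (∑ i : Fin d, ∑ j : Fin d, spDeriv d i (spDeriv d j u) z ^ 2)

/-!
Split the region where `1_{C_{2ρ}ᶜ} g(z + ·)` can be nonzero into the dyadic shells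
`C_{2^{n+1}ρ} \ C_{2^n ρ}`. On the shell at scale `R` the kernel is at most a constant times
`R^{α-d-2}` (since `s^γ e^{-s}` is bounded), and the integral of `g` over `C_{2R}(z)` is at most
`|C_1| (2R)^{d+2-β} M_β g(z)`. The shell contributions are thus `≲ (2^n ρ)^{α-β} M_β g(z)`, a
geometric series because `α < β`.
-/

namespace Real

lemma rpow_mul_exp_neg_le_factorial {γ t : ℝ} (hγ : 0 ≤ γ) (ht : 0 ≤ t) :
    t ^ γ * exp (-t) ≤ (⌈γ⌉₊).factorial := by
  have hfact : (1 : ℝ) ≤ (⌈γ⌉₊).factorial := by exact_mod_cast Nat.factorial_pos _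
  rcases le_total t 1 with ht1 | ht1
  · calc t ^ γ * exp (-t) ≤ 1 * 1 := by
          gcongr
          · exact rpow_le_one ht ht1 hγ
          · exact exp_le_one_iff.mpr (neg_nonpos.mpr ht)
      _ ≤ _ := by rwa [one_mul]
  · have hpow : t ^ γ ≤ t ^ ⌈γ⌉₊ := by
      rw [← rpow_natCast]
      exact rpow_le_rpow_of_exponent_le ht1 (Nat.le_ceil γ)
    have hexp := pow_div_factorial_le_exp t ht ⌈γ⌉₊
    rw [div_le_iff₀ (by positivity)] at hexp
    rw [exp_neg, ← div_eq_mul_inv, div_le_iff₀ (exp_pos t)]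
    nlinarith [rpow_nonneg ht γ]

lemma rpow_neg_mul_exp_neg_div_le {γ a s : ℝ} (hγ : 0 ≤ γ) (ha : 0 < a) (hs : 0 < s) :
    s ^ (-γ) * exp (-(a / s)) ≤ (⌈γ⌉₊).factorial * a ^ (-γ) := by
  have hsplit : s ^ (-γ) = a ^ (-γ) * (a / s) ^ γ := by
    rw [div_rpow ha.le hs.le, rpow_neg ha.le, rpow_neg hs.le]
    field_simp [(rpow_pos_of_pos ha γ).ne']
  rw [hsplit, mul_assoc, mul_comm _ (a ^ (-γ))]
  exact mul_le_mul_of_nonneg_left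
    (rpow_mul_exp_neg_le_factorial hγ (div_pos ha hs).le) (rpow_nonneg ha.le _)

end Real

lemma tsum_ofReal_mul_rpow_two_pow_mul {K ρ s : ℝ} (hK : 0 ≤ K) (hρ : 0 < ρ) (hs : s < 0) :
    ∑' n : ℕ, ENNReal.ofReal (K * (2 ^ n * ρ) ^ s) =
      ENNReal.ofReal (K * (1 - 2 ^ s)⁻¹ * ρ ^ s) := by
  have hq0 : 0 ≤ (2 : ℝ) ^ s := by positivity
  have hq1 : (2 : ℝ) ^ s < 1 := Real.rpow_lt_one_of_one_lt_of_neg one_lt_two hs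
  have hterm : ∀ n : ℕ, K * (2 ^ n * ρ) ^ s = K * ρ ^ s * ((2 : ℝ) ^ s) ^ n := fun n => by
    rw [Real.mul_rpow (by positivity) hρ.le, ← Real.rpow_natCast, ← Real.rpow_mul zero_le_two,
      ← Real.rpow_natCast, ← Real.rpow_mul zero_le_two, mul_comm s]
    ring
  simp_rw [hterm]
  rw [← ENNReal.ofReal_tsum_of_nonneg (fun n => by positivity)
      ((summable_geometric_of_lt_one hq0 hq1).mul_left _), tsum_mul_left,
    tsum_geometric_of_lt_one hq0 hq1]
  ring_nf

lemma Set.exists_mem_succ_diff {α : Type*} {f : ℕ → Set α} {x : α} (h0 : x ∉ f 0) :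
    ∀ {n : ℕ}, x ∈ f n → ∃ k, x ∈ f (k + 1) \ f k
  | 0, hx => absurd hx h0
  | n + 1, hx => by
    by_cases hn : x ∈ f n
    exacts [exists_mem_succ_diff h0 hn, ⟨n, hx, hn⟩]

instance (d : ℕ) : (volume : Measure (Pt d)).IsAddLeftInvariant := by
  rw [Measure.volume_eq_prod]
  infer_instance

section

variable {d : ℕ}

lemma pCyl_eq_prod (ρ : ℝ) (z : Pt d) :
    pCyl d ρ z = Ico z.1 (z.1 + ρ ^ 2) ×ˢ Metric.ball z.2 ρ := by
  ext w
  simp only [pCyl, mem_ofPred_eq, mem_prod, mem_Ico, Metric.mem_ball, dist_comm]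
  tauto

lemma measurableSet_pCyl (ρ : ℝ) (z : Pt d) : MeasurableSet (pCyl d ρ z) := by
  rw [pCyl_eq_prod]
  exact measurableSet_Ico.prod Metric.isOpen_ball.measurableSet

lemma volume_pCyl {ρ : ℝ} (hρ : 0 < ρ) (z : Pt d) :
    volume (pCyl d ρ z) =
      ENNReal.ofReal (volume.real (Metric.ball (0 : Ed d) 1) * ρ ^ ((d : ℝ) + 2)) := by
  rw [pCyl_eq_prod, Measure.volume_eq_prod, Measure.prod_prod, Real.volume_Ico,
    Measure.addHaar_ball_of_pos _ _ hρ, finrank_euclideanSpace_fin,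
    ← ofReal_measureReal measure_ball_lt_top.ne, add_sub_cancel_left,
    ← ENNReal.ofReal_mul (by positivity), ← ENNReal.ofReal_mul (by positivity),
    Real.rpow_add hρ, Real.rpow_natCast, Real.rpow_two]
  ring_nf

lemma mem_pCyl_zero {ρ : ℝ} {w : Pt d} :
    w ∈ pCyl d ρ 0 ↔ ‖w.2‖ < ρ ∧ 0 ≤ w.1 ∧ w.1 < ρ ^ 2 := by
  simp [pCyl, dist_eq_norm]

lemma add_mem_pCyl_iff {ρ : ℝ} {z w : Pt d} : z + w ∈ pCyl d ρ z ↔ w ∈ pCyl d ρ 0 := by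
  simp [pCyl, dist_eq_norm]

lemma add_mem_pCyl_two_mul {ρ : ℝ} {z w : Pt d} (hz : z ∈ pCyl d ρ 0) (hw : w ∈ pCyl d ρ 0) :
    z + w ∈ pCyl d (2 * ρ) 0 := by
  rw [mem_pCyl_zero] at *
  obtain ⟨hz2, hz1, hz1'⟩ := hz
  obtain ⟨hw2, hw1, hw1'⟩ := hw
  simp only [Prod.fst_add, Prod.snd_add]
  exact ⟨(norm_add_le _ _).trans_lt (by linarith), by linarith, by nlinarith⟩

lemma exists_mem_pCyl_two_pow_mul {ρ : ℝ} (hρ : 0 < ρ) {w : Pt d} (hw : 0 ≤ w.1) :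
    ∃ n : ℕ, w ∈ pCyl d (2 ^ n * ρ) 0 := by
  have hR : Tendsto (fun n : ℕ => (2 : ℝ) ^ n * ρ) atTop atTop :=
    (tendsto_pow_atTop_atTop_of_one_lt (one_lt_two : (1 : ℝ) < 2)).atTop_mul_const hρ
  obtain ⟨n, hn2, hn1⟩ :=
    ((hR.eventually_gt_atTop ‖w.2‖).and
      ((hR.atTop_mul_atTop₀ hR).eventually_gt_atTop w.1)).exists
  exact ⟨n, mem_pCyl_zero.mpr ⟨hn2, hw, by simpa [sq] using hn1⟩⟩

lemma pKer_le_of_notMem_pCyl {α : ℝ} (hα : α ≤ (d : ℝ) + 2) {R : ℝ} (hR : 0 < R) {w : Pt d}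
    (hw : w ∉ pCyl d R 0) :
    pKer d α w.1 ‖w.2‖ ≤
      ENNReal.ofReal ((⌈((d : ℝ) + 2 - α) / 2⌉₊).factorial * R ^ (α - ((d : ℝ) + 2))) := by
  unfold pKer
  split_ifs with hs
  swap
  · exact zero_le
  apply ENNReal.ofReal_le_ofReal
  set γ := ((d : ℝ) + 2 - α) / 2
  have hγ : 0 ≤ γ := by simp only [γ]; linarith
  have hRγ : R ^ (α - ((d : ℝ) + 2)) = (R ^ 2) ^ (-γ) := by
    rw [← Real.rpow_natCast, ← Real.rpow_mul hR.le]
    simp only [γ]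
    ring_nf
  rw [hRγ]
  have hout : R ≤ ‖w.2‖ ∨ R ^ 2 ≤ w.1 := by
    by_contra! h
    exact hw (mem_pCyl_zero.mpr ⟨h.1, hs.le, h.2⟩)
  rcases hout with hr | hs'
  · calc w.1 ^ (-γ) * Real.exp (-(‖w.2‖ ^ 2) / w.1)
          ≤ w.1 ^ (-γ) * Real.exp (-(R ^ 2 / w.1)) := by
            rw [neg_div]
            gcongr
      _ ≤ _ := Real.rpow_neg_mul_exp_neg_div_le hγ (by positivity) hs
  · calc w.1 ^ (-γ) * Real.exp (-(‖w.2‖ ^ 2) / w.1) ≤ (R ^ 2) ^ (-γ) * 1 :=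
          mul_le_mul (Real.rpow_le_rpow_of_nonpos (by positivity) hs' (by linarith))
            (Real.exp_le_one_iff.mpr
              (div_nonpos_of_nonpos_of_nonneg (neg_nonpos.mpr (sq_nonneg _)) hs.le))
            (Real.exp_pos _).le (by positivity)
      _ ≤ _ := by
          rw [mul_one]
          exact le_mul_of_one_le_left (by positivity)
            (by exact_mod_cast Nat.one_le_iff_ne_zero.mpr (Nat.factorial_ne_zero _))

lemma setLIntegral_pCyl_le_Mbeta (β : ℝ) (g : Pt d → ℝ≥0∞) (z : Pt d) {r : ℝ} (hr : 0 < r) :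
    ∫⁻ u in pCyl d r z, g u ≤
      ENNReal.ofReal (volume.real (Metric.ball (0 : Ed d) 1) * r ^ ((d : ℝ) + 2 - β)) *
        Mbeta d β g z := by
  have hball : 0 < volume.real (Metric.ball (0 : Ed d) 1) :=
    ENNReal.toReal_pos (Metric.measure_ball_pos _ _ one_pos).ne' measure_ball_lt_top.ne
  have hV := volume_pCyl hr z
  have hV0 : volume (pCyl d r z) ≠ 0 := by
    rw [hV]
    exact (ENNReal.ofReal_pos.mpr (by positivity)).ne'
  calc ∫⁻ u in pCyl d r z, g u = volume (pCyl d r z) * pAvg d r z g := by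
        rw [pAvg, ← mul_assoc, ENNReal.mul_inv_cancel hV0 (hV ▸ ENNReal.ofReal_ne_top), one_mul]
    _ = ENNReal.ofReal (volume.real (Metric.ball (0 : Ed d) 1) * r ^ ((d : ℝ) + 2 - β)) *
          (ENNReal.ofReal (r ^ β) * pAvg d r z g) := by
        rw [hV, ← mul_assoc, ← ENNReal.ofReal_mul (by positivity), mul_assoc,
          ← Real.rpow_add hr, sub_add_cancel]
    _ ≤ _ := by
        gcongr
        exact le_iSup₂ (f := fun ρ (_ : 0 < ρ) => ENNReal.ofReal (ρ ^ β) * pAvg d ρ z g) r hr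

lemma setLIntegral_add_pCyl_zero (g : Pt d → ℝ≥0∞) (r : ℝ) (z : Pt d) :
    ∫⁻ w in pCyl d r 0, g (z + w) = ∫⁻ u in pCyl d r z, g u := by
  have hpre : (z + ·) ⁻¹' pCyl d r z = pCyl d r 0 := by
    ext w
    exact (add_mem_pCyl_iff : z + w ∈ pCyl d r z ↔ _)
  rw [← hpre]
  exact (measurePreserving_add_left volume z).setLIntegral_comp_preimage_emb
    (measurableEmbedding_addLeft z) g _

lemma exists_setLIntegral_pKer_shell_le {α : ℝ} (hα : α ≤ (d : ℝ) + 2) (β : ℝ) :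
    ∃ K > 0, ∀ {R : ℝ}, 0 < R → ∀ (g : Pt d → ℝ≥0∞) (z : Pt d),
      ∫⁻ w in pCyl d (2 * R) 0 \ pCyl d R 0, pKer d α w.1 ‖w.2‖ * g (z + w) ≤
        ENNReal.ofReal (K * R ^ (α - β)) * Mbeta d β g z := by
  set C : ℝ := ((⌈((d : ℝ) + 2 - α) / 2⌉₊).factorial : ℝ)
  set V := volume.real (Metric.ball (0 : Ed d) 1)
  have hV : 0 < V :=
    ENNReal.toReal_pos (Metric.measure_ball_pos _ _ one_pos).ne' measure_ball_lt_top.ne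
  refine ⟨C * V * 2 ^ ((d : ℝ) + 2 - β), by positivity, fun {R} hR g z => ?_⟩
  have hscale : C * R ^ (α - ((d : ℝ) + 2)) * (V * (2 * R) ^ ((d : ℝ) + 2 - β)) =
      C * V * 2 ^ ((d : ℝ) + 2 - β) * R ^ (α - β) := by
    have hR' : R ^ (α - ((d : ℝ) + 2)) * R ^ ((d : ℝ) + 2 - β) = R ^ (α - β) := by
      rw [← Real.rpow_add hR]
      ring_nf
    rw [Real.mul_rpow zero_le_two hR.le]
    linear_combination C * V * 2 ^ ((d : ℝ) + 2 - β) * hR'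
  calc ∫⁻ w in pCyl d (2 * R) 0 \ pCyl d R 0, pKer d α w.1 ‖w.2‖ * g (z + w)
        ≤ ∫⁻ w in pCyl d (2 * R) 0 \ pCyl d R 0,
            ENNReal.ofReal (C * R ^ (α - ((d : ℝ) + 2))) * g (z + w) :=
        setLIntegral_mono' ((measurableSet_pCyl _ _).diff (measurableSet_pCyl _ _))
          fun w hw => by gcongr; exact pKer_le_of_notMem_pCyl hα hR hw.2
    _ = ENNReal.ofReal (C * R ^ (α - ((d : ℝ) + 2))) *
          ∫⁻ w in pCyl d (2 * R) 0 \ pCyl d R 0, g (z + w) :=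
        lintegral_const_mul' _ _ ENNReal.ofReal_ne_top
    _ ≤ ENNReal.ofReal (C * R ^ (α - ((d : ℝ) + 2))) * ∫⁻ u in pCyl d (2 * R) z, g u := by
        rw [← setLIntegral_add_pCyl_zero]
        gcongr
        exact sdiff_subset
    _ ≤ ENNReal.ofReal (C * R ^ (α - ((d : ℝ) + 2))) *
          (ENNReal.ofReal (V * (2 * R) ^ ((d : ℝ) + 2 - β)) * Mbeta d β g z) := by
        gcongr
        exact setLIntegral_pCyl_le_Mbeta β g z (by positivity)
    _ = _ := by
        rw [← mul_assoc, ← ENNReal.ofReal_mul (by positivity), hscale]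

lemma Palpha_indicator_compl_le_tsum {ρ : ℝ} (hρ : 0 < ρ) {z : Pt d} (hz : z ∈ pCyl d ρ 0)
    (α : ℝ) (g : Pt d → ℝ≥0∞) :
    Palpha d α ((pCyl d (2 * ρ) 0)ᶜ.indicator g) z ≤
      ∑' n : ℕ, ∫⁻ w in pCyl d (2 ^ (n + 1) * ρ) 0 \ pCyl d (2 ^ n * ρ) 0,
        pKer d α w.1 ‖w.2‖ * g (z + w) := by
  set F : Pt d → ℝ≥0∞ := fun w =>
    pKer d α w.1 ‖w.2‖ * (pCyl d (2 * ρ) 0)ᶜ.indicator g (z + w)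
  have hsupp :
      Function.support F ⊆ ⋃ n : ℕ, pCyl d (2 ^ (n + 1) * ρ) 0 \ pCyl d (2 ^ n * ρ) 0 := by
    intro w hw
    have hpos : 0 < w.1 := by
      by_contra! h
      exact hw (by simp [F, pKer, not_lt.mpr h])
    have hout : w ∉ pCyl d (2 ^ 0 * ρ) 0 := fun hw0 =>
      hw (by simp [F, add_mem_pCyl_two_mul hz (by simpa using hw0)])
    obtain ⟨n, hn⟩ := exists_mem_pCyl_two_pow_mul hρ hpos.le
    exact mem_iUnion.mpr (exists_mem_succ_diff (f := fun n => pCyl d (2 ^ n * ρ) 0) hout hn)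
  calc Palpha d α ((pCyl d (2 * ρ) 0)ᶜ.indicator g) z = ∫⁻ w, F w := rfl
    _ = ∫⁻ w in ⋃ n : ℕ, pCyl d (2 ^ (n + 1) * ρ) 0 \ pCyl d (2 ^ n * ρ) 0, F w :=
        (setLIntegral_eq_of_support_subset hsupp).symm
    _ ≤ _ := (lintegral_iUnion_le _ _).trans <| ENNReal.tsum_le_tsum fun n =>
        lintegral_mono fun w => mul_le_mul_right (indicator_le_self _ _ _) _

end

theorem stmt5_general (d : ℕ) (α β : ℝ) (hαβ : α < β)
    (hβ : β ≤ (d : ℝ) + 2) :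
    ∃ N : ℝ, 0 < N ∧ ∀ g : Pt d → ℝ≥0∞, Measurable g → ∀ ρ : ℝ, 0 < ρ →
      ∀ z ∈ pCyl d ρ 0,
        Palpha d α ((pCyl d (2 * ρ) 0)ᶜ.indicator g) z ≤
          ENNReal.ofReal (N * ρ ^ (α - β)) * Mbeta d β g z := by
  obtain ⟨K, hK, hshell⟩ := exists_setLIntegral_pKer_shell_le (hαβ.le.trans hβ) β
  have hq : (2 : ℝ) ^ (α - β) < 1 := Real.rpow_lt_one_of_one_lt_of_neg one_lt_two (by linarith)
  refine ⟨K * (1 - 2 ^ (α - β))⁻¹, mul_pos hK (inv_pos.mpr (sub_pos.mpr hq)),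
    fun g _ ρ hρ z hz => ?_⟩
  calc Palpha d α ((pCyl d (2 * ρ) 0)ᶜ.indicator g) z
      ≤ ∑' n : ℕ, ∫⁻ w in pCyl d (2 ^ (n + 1) * ρ) 0 \ pCyl d (2 ^ n * ρ) 0,
          pKer d α w.1 ‖w.2‖ * g (z + w) := Palpha_indicator_compl_le_tsum hρ hz α g
    _ ≤ ∑' n : ℕ, ENNReal.ofReal (K * (2 ^ n * ρ) ^ (α - β)) * Mbeta d β g z :=
        ENNReal.tsum_le_tsum fun n => by
          rw [pow_succ, mul_comm _ (2 : ℝ), mul_assoc]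
          exact hshell (by positivity) g z
    _ = ENNReal.ofReal (K * (1 - 2 ^ (α - β))⁻¹ * ρ ^ (α - β)) * Mbeta d β g z := by
        rw [ENNReal.tsum_mul_right, tsum_ofReal_mul_rpow_two_pow_mul hK.le hρ (by linarith)]

/-- Corollary 2.6: for `α ∈ (0,β)`, `β ∈ (0, d+2]` there is `N = N(d,α,β)`
such that `P_α(1_{C_{2ρ}^c} g)(t,x) ≤ N ρ^{α-β} M_β g(t,x)` for all `(t,x) ∈ C_ρ`. -/
theorem stmt5 (d : ℕ) (hd : 1 ≤ d) (α β : ℝ) (hα : 0 < α) (hαβ : α < β)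
    (hβ : β ≤ (d : ℝ) + 2) :
    ∃ N : ℝ, 0 < N ∧ ∀ g : Pt d → ℝ≥0∞, Measurable g → ∀ ρ : ℝ, 0 < ρ →
      ∀ z ∈ pCyl d ρ 0,
        Palpha d α ((pCyl d (2 * ρ) 0)ᶜ.indicator g) z ≤
          ENNReal.ofReal (N * ρ ^ (α - β)) * Mbeta d β g z :=
  stmt5_general d α β hαβ hβ

end
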